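/- arXiv:2503.16110 — 4 statements merged into one kernel-verified Lean document; each statement's English description precedes it below -/
import Mathlib

section
/- Let u : ℝ × ℝ → ℝ be twice continuously differentiable on a rectangle R = [x_i − h, x_i + h] × [t^{n+1} − τ, t^{n+1}] (h, τ > 0), and suppose all second-order partial derivatives of u are bounded in absolute value by M₂ on R. For any ω ∈ [0,1] define the compact implicit value U(ω) = u(x_i, t^{n+1}) − (1/2)·[ω·(u(x_i − h, t^{n+1}) − u(x_i, t^{n+1} − τ)) + (1 − ω)·(u(x_i, t^{n+1}) − u(x_i + h, t^{n+1} − τ))]. Then there is an absolute constant C (independent of u, h, τ, ω, x_i, t^{n+1}) such that |U(ω) − u(x_i + h/2, t^{n+1} − τ/2)| ≤ C·M₂·(h² + τ²). -/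
set_option maxHeartbeats 1000000 in
/-- Second order accuracy of the compact implicit interface value: there is an absolute
constant `C` such that for every C² function `u` on the rectangle
`R = [xᵢ−h, xᵢ+h] × [tⁿ⁺¹−τ, tⁿ⁺¹]` whose second derivatives are bounded by `M₂` on `R`,
and every `ω ∈ [0,1]`, the compact implicit value `U(ω)` differs from
`u(xᵢ + h/2, tⁿ⁺¹ − τ/2)` by at most `C·M₂·(h² + τ²)`. -/
theorem stmt_5 :
    ∃ C : ℝ, 0 < C ∧
      ∀ (u : ℝ × ℝ → ℝ) (M₂ xi t1 h τ ω : ℝ),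
        0 < h → 0 < τ → ω ∈ Set.Icc (0 : ℝ) 1 →
        ContDiffOn ℝ 2 u (Set.Icc (xi - h) (xi + h) ×ˢ Set.Icc (t1 - τ) t1) →
        (∀ z ∈ Set.Icc (xi - h) (xi + h) ×ˢ Set.Icc (t1 - τ) t1,
          ‖iteratedFDerivWithin ℝ 2 u
            (Set.Icc (xi - h) (xi + h) ×ˢ Set.Icc (t1 - τ) t1) z‖ ≤ M₂) →
        |u (xi, t1) - (1 / 2) * (ω * (u (xi - h, t1) - u (xi, t1 - τ)) +
            (1 - ω) * (u (xi, t1) - u (xi + h, t1 - τ))) -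
          u (xi + h / 2, t1 - τ / 2)| ≤ C * M₂ * (h ^ 2 + τ ^ 2) := by
  refine ⟨9, by norm_num, ?_⟩
  intro u M₂ xi t1 h τ ω hh hτ hω hcd hbd
  set s : Set (ℝ × ℝ) := Set.Icc (xi - h) (xi + h) ×ˢ Set.Icc (t1 - τ) t1 with hs
  have hconv : Convex ℝ s := (convex_Icc _ _).prod (convex_Icc _ _)
  have hud : UniqueDiffOn ℝ s :=
    (uniqueDiffOn_Icc (by linarith)).prod (uniqueDiffOn_Icc (by linarith))
  -- the five points
  set p : ℝ × ℝ := (xi + h / 2, t1 - τ / 2) with hp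
  set A : ℝ × ℝ := (xi, t1) with hA
  set B : ℝ × ℝ := (xi - h, t1) with hB
  set Cp : ℝ × ℝ := (xi, t1 - τ) with hC
  set D : ℝ × ℝ := (xi + h, t1 - τ) with hD
  have hAs : A ∈ s := by constructor <;> constructor <;> simp [hA] <;> linarith
  have hBs : B ∈ s := by constructor <;> constructor <;> simp [hB] <;> linarith
  have hCs : Cp ∈ s := by constructor <;> constructor <;> simp [hC] <;> linarith
  have hDs : D ∈ s := by constructor <;> constructor <;> simp [hD] <;> linarith
  have hps : p ∈ s := by constructor <;> constructor <;> simp [hp] <;> linarith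
  have hM₂0 : 0 ≤ M₂ := le_trans (norm_nonneg _) (hbd A hAs)
  -- differentiability
  have hDu : DifferentiableOn ℝ u s := hcd.differentiableOn (by norm_num)
  have hDu2 : DifferentiableOn ℝ (fderivWithin ℝ u s) s :=
    (hcd.fderivWithin hud (by norm_num : (1:WithTop ℕ∞) + 1 ≤ 2)).differentiableOn one_ne_zero
  -- bound on second derivative as fderivWithin of fderivWithin
  have hbd2 : ∀ z ∈ s, ‖fderivWithin ℝ (fderivWithin ℝ u s) s z‖ ≤ M₂ := by
    intro z hz
    have h1 : iteratedFDerivWithin ℝ 1 (fderivWithin ℝ u s) s z =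
        (continuousMultilinearCurryFin1 ℝ (ℝ × ℝ) ((ℝ × ℝ) →L[ℝ] ℝ)).symm
          (fderivWithin ℝ (fderivWithin ℝ u s) s z) := by
      ext m : 1
      simp [iteratedFDerivWithin_one_apply (hud z hz)]
    have h2 := norm_iteratedFDerivWithin_fderivWithin (f := u) (n := 1) hud hz
    calc ‖fderivWithin ℝ (fderivWithin ℝ u s) s z‖
        = ‖iteratedFDerivWithin ℝ 1 (fderivWithin ℝ u s) s z‖ := by
          rw [h1, LinearIsometryEquiv.norm_map]
      _ = ‖iteratedFDerivWithin ℝ 2 u s z‖ := h2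
      _ ≤ M₂ := hbd z hz
  set L : (ℝ × ℝ) →L[ℝ] ℝ := fderivWithin ℝ u s p with hL
  -- Lipschitz bound on the derivative
  set K : ℝ := M₂ * (3 / 2 * max h τ) with hK
  have hLip : ∀ z ∈ s, ‖fderivWithin ℝ u s z - L‖ ≤ K := by
    intro z hz
    have := hconv.norm_image_sub_le_of_norm_fderivWithin_le hDu2 hbd2 hps hz
    refine this.trans ?_
    have hzp : ‖z - p‖ ≤ 3 / 2 * max h τ := by
      rcases hz with ⟨hz1, hz2⟩
      rw [Prod.norm_def]
      have h1 : |z.1 - p.1| ≤ 3 / 2 * max h τ := by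
        simp only [hp] at *
        rw [abs_le]
        have := le_max_left h τ
        simp at hz1
        constructor <;> simp <;> linarith [hz1.1, hz1.2]
      have h2 : |z.2 - p.2| ≤ 3 / 2 * max h τ := by
        simp only [hp] at *
        rw [abs_le]
        have := le_max_right h τ
        simp at hz2
        constructor <;> simp <;> linarith [hz2.1, hz2.2]
      exact max_le h1 h2
    calc M₂ * ‖z - p‖ ≤ M₂ * (3 / 2 * max h τ) :=
          mul_le_mul_of_nonneg_left hzp hM₂0
      _ = K := rfl
  -- remainder bound at each point
  have hrem : ∀ z ∈ s, |u z - u p - L (z - p)| ≤ (9 / 4) * M₂ * (h ^ 2 + τ ^ 2) := by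
    intro z hz
    have := hconv.norm_image_sub_le_of_norm_fderivWithin_le' hDu hLip hps hz
    have hzp : ‖z - p‖ ≤ 3 / 2 * max h τ := by
      rcases hz with ⟨hz1, hz2⟩
      rw [Prod.norm_def]
      have h1 : |z.1 - p.1| ≤ 3 / 2 * max h τ := by
        simp only [hp] at *
        rw [abs_le]
        have := le_max_left h τ
        simp at hz1
        constructor <;> simp <;> linarith [hz1.1, hz1.2]
      have h2 : |z.2 - p.2| ≤ 3 / 2 * max h τ := by
        simp only [hp] at *
        rw [abs_le]
        have := le_max_right h τ
        simp at hz2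
        constructor <;> simp <;> linarith [hz2.1, hz2.2]
      exact max_le h1 h2
    have hmax2 : (max h τ) ^ 2 ≤ h ^ 2 + τ ^ 2 := by
      rcases max_cases h τ with ⟨he, _⟩ | ⟨he, _⟩ <;> rw [he] <;> nlinarith
    calc |u z - u p - L (z - p)| ≤ K * ‖z - p‖ := this
      _ ≤ K * (3 / 2 * max h τ) := by
          apply mul_le_mul_of_nonneg_left hzp
          have : 0 ≤ max h τ := le_trans hh.le (le_max_left _ _)
          positivity
      _ = (9 / 4) * M₂ * (max h τ) ^ 2 := by rw [hK]; ring
      _ ≤ (9 / 4) * M₂ * (h ^ 2 + τ ^ 2) := by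
          apply mul_le_mul_of_nonneg_left hmax2; positivity
  -- linear parts cancel
  have hvec : ((1 + ω) / 2) • (A - p) - (ω / 2) • (B - p) + (ω / 2) • (Cp - p)
      + ((1 - ω) / 2) • (D - p) = (0 : ℝ × ℝ) := by
    have e1 : A - p = (-(h / 2), τ / 2) := by
      rw [hA, hp, Prod.mk_sub_mk]; norm_num
    have e2 : B - p = (-(3 * h / 2), τ / 2) := by
      rw [hB, hp, Prod.mk_sub_mk, Prod.mk.injEq]; exact ⟨by ring, by ring⟩
    have e3 : Cp - p = (-(h / 2), -(τ / 2)) := by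
      rw [hC, hp, Prod.mk_sub_mk, Prod.mk.injEq]; exact ⟨by ring, by ring⟩
    have e4 : D - p = (h / 2, -(τ / 2)) := by
      rw [hD, hp, Prod.mk_sub_mk, Prod.mk.injEq]; exact ⟨by ring, by ring⟩
    rw [e1, e2, e3, e4]
    simp only [Prod.smul_mk, smul_eq_mul, Prod.mk_add_mk, Prod.mk_sub_mk, Prod.mk_eq_zero]
    exact ⟨by ring, by ring⟩
  have hlin : ((1 + ω) / 2) * L (A - p) - (ω / 2) * L (B - p) + (ω / 2) * L (Cp - p)
      + ((1 - ω) / 2) * L (D - p) = 0 := by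
    have := congrArg L hvec
    simpa [map_add, map_sub, map_smul, smul_eq_mul] using this
  -- decompose the error
  set rA := u A - u p - L (A - p)
  set rB := u B - u p - L (B - p)
  set rC := u Cp - u p - L (Cp - p)
  set rD := u D - u p - L (D - p)
  have hdecomp : u A - (1 / 2) * (ω * (u B - u Cp) + (1 - ω) * (u A - u D)) - u p
      = ((1 + ω) / 2) * rA - (ω / 2) * rB + (ω / 2) * rC + ((1 - ω) / 2) * rD := by
    simp only [rA, rB, rC, rD]
    linear_combination hlin
  have hω0 := hω.1
  have hω1 := hω.2
  have hbA := hrem A hAs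
  have hbB := hrem B hBs
  have hbC := hrem Cp hCs
  have hbD := hrem D hDs
  calc |u A - (1 / 2) * (ω * (u B - u Cp) + (1 - ω) * (u A - u D)) - u p|
      = |((1 + ω) / 2) * rA - (ω / 2) * rB + (ω / 2) * rC + ((1 - ω) / 2) * rD| := by
        rw [hdecomp]
    _ ≤ |((1 + ω) / 2) * rA| + |(ω / 2) * rB| + |(ω / 2) * rC| + |((1 - ω) / 2) * rD| := by
        calc _ ≤ |((1 + ω) / 2) * rA - (ω / 2) * rB + (ω / 2) * rC| + |((1 - ω) / 2) * rD| :=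
              abs_add_le _ _
          _ ≤ |((1 + ω) / 2) * rA - (ω / 2) * rB| + |(ω / 2) * rC| + |((1 - ω) / 2) * rD| := by
              gcongr; exact abs_add_le _ _
          _ ≤ |((1 + ω) / 2) * rA| + |(ω / 2) * rB| + |(ω / 2) * rC| + |((1 - ω) / 2) * rD| := by
              gcongr; exact abs_sub _ _
    _ ≤ ((1 + ω) / 2) * ((9 / 4) * M₂ * (h ^ 2 + τ ^ 2))
        + (ω / 2) * ((9 / 4) * M₂ * (h ^ 2 + τ ^ 2))
        + (ω / 2) * ((9 / 4) * M₂ * (h ^ 2 + τ ^ 2))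
        + ((1 - ω) / 2) * ((9 / 4) * M₂ * (h ^ 2 + τ ^ 2)) := by
        have bA : |((1 + ω) / 2) * rA| ≤ ((1 + ω) / 2) * ((9 / 4) * M₂ * (h ^ 2 + τ ^ 2)) := by
          rw [abs_mul, abs_of_nonneg (by linarith : (0:ℝ) ≤ (1 + ω) / 2)]
          exact mul_le_mul_of_nonneg_left hbA (by linarith)
        have bB : |(ω / 2) * rB| ≤ (ω / 2) * ((9 / 4) * M₂ * (h ^ 2 + τ ^ 2)) := by
          rw [abs_mul, abs_of_nonneg (by linarith : (0:ℝ) ≤ ω / 2)]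
          exact mul_le_mul_of_nonneg_left hbB (by linarith)
        have bC : |(ω / 2) * rC| ≤ (ω / 2) * ((9 / 4) * M₂ * (h ^ 2 + τ ^ 2)) := by
          rw [abs_mul, abs_of_nonneg (by linarith : (0:ℝ) ≤ ω / 2)]
          exact mul_le_mul_of_nonneg_left hbC (by linarith)
        have bD : |((1 - ω) / 2) * rD| ≤ ((1 - ω) / 2) * ((9 / 4) * M₂ * (h ^ 2 + τ ^ 2)) := by
          rw [abs_mul, abs_of_nonneg (by linarith : (0:ℝ) ≤ (1 - ω) / 2)]
          exact mul_le_mul_of_nonneg_left hbD (by linarith)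
        exact add_le_add (add_le_add (add_le_add bA bB) bC) bD
    _ = (1 + ω) * ((9 / 4) * M₂ * (h ^ 2 + τ ^ 2)) := by ring
    _ ≤ 2 * ((9 / 4) * M₂ * (h ^ 2 + τ ^ 2)) := by
        apply mul_le_mul_of_nonneg_right (by linarith); positivity
    _ ≤ 9 * M₂ * (h ^ 2 + τ ^ 2) := by nlinarith [sq_nonneg h, sq_nonneg τ, mul_nonneg hM₂0 (by positivity : (0:ℝ) ≤ h^2 + τ^2)]
end

section
/- Fix p > 0, F(u) = u + u^p, λ > 0 and M ≥ 1. Let A_0, B_0 ≥ 0 and a_i, b_i ≥ 0 (i = 1, …, M), and let A_i, B_i ≥ 0 satisfy the implicit upwind equations F(A_i) + λ(A_i − A_{i−1}) = F(a_i) and F(B_i) + λ(B_i − B_{i−1}) = F(b_i) for i = 1, …, M. If A_0 ≤ B_0 and a_i ≤ b_i for all i, then A_i ≤ B_i for all i = 1, …, M (discrete comparison principle for the implicit scheme, valid for every λ = τ/h > 0). -/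
/-- Discrete comparison principle for the implicit upwind scheme with `F(u) = u + u^p`:
if `F(Aᵢ) + λ(Aᵢ − A_{i−1}) = F(aᵢ)` and `F(Bᵢ) + λ(Bᵢ − B_{i−1}) = F(bᵢ)` with
`A₀ ≤ B₀` and `aᵢ ≤ bᵢ`, then `Aᵢ ≤ Bᵢ` for all `i = 1, …, M`, for every `λ > 0`. -/
theorem stmt_8 (p lam : ℝ) (hp : 0 < p) (hlam : 0 < lam) (M : ℕ) (hM : 1 ≤ M)
    (A B a b : ℕ → ℝ)
    (hA0 : 0 ≤ A 0) (hB0 : 0 ≤ B 0)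
    (ha : ∀ i, 1 ≤ i → i ≤ M → 0 ≤ a i) (hb : ∀ i, 1 ≤ i → i ≤ M → 0 ≤ b i)
    (hAnn : ∀ i, 1 ≤ i → i ≤ M → 0 ≤ A i) (hBnn : ∀ i, 1 ≤ i → i ≤ M → 0 ≤ B i)
    (hAeq : ∀ i, 1 ≤ i → i ≤ M →
      (A i + A i ^ p) + lam * (A i - A (i - 1)) = a i + a i ^ p)
    (hBeq : ∀ i, 1 ≤ i → i ≤ M →
      (B i + B i ^ p) + lam * (B i - B (i - 1)) = b i + b i ^ p)
    (h0 : A 0 ≤ B 0) (hab : ∀ i, 1 ≤ i → i ≤ M → a i ≤ b i) :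
    ∀ i, 1 ≤ i → i ≤ M → A i ≤ B i := by
  have key : ∀ i, i ≤ M → A i ≤ B i := by
    intro i
    induction i with
    | zero => intro _; exact h0
    | succ n ih =>
      intro hle
      have hn : n ≤ M := Nat.le_of_succ_le hle
      have hAB : A n ≤ B n := ih hn
      have h1 : 1 ≤ n + 1 := Nat.succ_le_succ (Nat.zero_le n)
      have hAn := hAnn (n+1) h1 hle
      have hBn := hBnn (n+1) h1 hle
      have ean := hAeq (n+1) h1 hle
      have ebn := hBeq (n+1) h1 hle
      simp only [Nat.add_sub_cancel] at ean ebn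
      have hab1 := hab (n+1) h1 hle
      have ha' := ha (n+1) h1 hle
      have hpowab : a (n+1) ^ p ≤ b (n+1) ^ p :=
        Real.rpow_le_rpow ha' hab1 hp.le
      by_contra hcon
      push_neg at hcon
      have hpow : B (n+1) ^ p < A (n+1) ^ p := Real.rpow_lt_rpow hBn hcon hp
      have h2 : lam * A n ≤ lam * B n := mul_le_mul_of_nonneg_left hAB hlam.le
      have h3 : lam * B (n+1) < lam * A (n+1) :=
        mul_lt_mul_of_pos_left hcon hlam
      nlinarith
  intro i _ h2; exact key i h2
end

section
/- Fix p > 0, F(u) = u + u^p, λ > 0, M ≥ 1 and constants 0 ≤ m ≤ M'. If U_0^{n+1} ∈ [m, M'], U_i^n ∈ [m, M'] for i = 1, …, M, and U_1^{n+1}, …, U_M^{n+1} ≥ 0 satisfy F(U_i^{n+1}) + λ(U_i^{n+1} − U_{i−1}^{n+1}) = F(U_i^n) for i = 1, …, M, then m ≤ U_i^{n+1} ≤ M' for all i = 1, …, M; in particular the implicit scheme preserves the bounds of the data for every time step τ > 0 (unconditional discrete maximum principle). -/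
/-- Unconditional discrete maximum principle for the implicit upwind scheme with
`F(u) = u + u^p`: if the boundary value and the data lie in `[m, M']` (`0 ≤ m ≤ M'`) and
`F(Uᵢⁿ⁺¹) + λ(Uᵢⁿ⁺¹ − U_{i−1}ⁿ⁺¹) = F(Uᵢⁿ)` for `i = 1, …, M`, then
`m ≤ Uᵢⁿ⁺¹ ≤ M'` for all `i`, for every `λ > 0`. -/
theorem stmt_9 (p lam : ℝ) (hp : 0 < p) (hlam : 0 < lam) (M : ℕ) (hM : 1 ≤ M)
    (m M' : ℝ) (hm : 0 ≤ m) (hmM : m ≤ M')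
    (U Un : ℕ → ℝ)
    (hU0 : U 0 ∈ Set.Icc m M')
    (hUn : ∀ i, 1 ≤ i → i ≤ M → Un i ∈ Set.Icc m M')
    (hUnn : ∀ i, 1 ≤ i → i ≤ M → 0 ≤ U i)
    (heq : ∀ i, 1 ≤ i → i ≤ M →
      (U i + U i ^ p) + lam * (U i - U (i - 1)) = Un i + Un i ^ p) :
    ∀ i, 1 ≤ i → i ≤ M → m ≤ U i ∧ U i ≤ M' := by
  intro i
  induction i with
  | zero => intro h; exact absurd h (by norm_num)
  | succ i ih =>
    intro _ hle
    have hprev : m ≤ U i ∧ U i ≤ M' := by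
      rcases Nat.eq_zero_or_pos i with h0 | hpos
      · subst h0; exact ⟨hU0.1, hU0.2⟩
      · exact ih hpos (le_trans (Nat.le_succ i) hle)
    have heqi := heq (i + 1) (by omega) hle
    simp only [Nat.add_sub_cancel] at heqi
    have hUpos := hUnn (i + 1) (by omega) hle
    have hUni := hUn (i + 1) (by omega) hle
    constructor
    · by_contra hlt
      push_neg at hlt
      have h1 : U (i + 1) ^ p ≤ m ^ p := Real.rpow_le_rpow hUpos hlt.le hp.le
      have h2 : m ^ p ≤ Un (i + 1) ^ p := Real.rpow_le_rpow hm hUni.1 hp.le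
      have h3 : (0:ℝ) ≤ lam * (U i - U (i + 1)) :=
        mul_nonneg hlam.le (by linarith [hprev.1])
      linarith [hUni.1]
    · by_contra hlt
      push_neg at hlt
      have h1 : M' ^ p ≤ U (i + 1) ^ p :=
        Real.rpow_le_rpow (le_trans hm hmM) hlt.le hp.le
      have h2 : Un (i + 1) ^ p ≤ M' ^ p :=
        Real.rpow_le_rpow (le_trans hm hUni.1) hUni.2 hp.le
      have h3 : (0:ℝ) < lam * (U (i + 1) - U i) :=
        mul_pos hlam (by linarith [hprev.2])
      linarith [hUni.2]
end

section
/- Fix p > 0, F(u) = u + u^p, and λ ∈ (0, 1] (Courant number at most 1, using F' ≥ 1). Let 0 ≤ m ≤ M' and suppose a, b ∈ [m, M']. If U ≥ 0 satisfies the explicit upwind update F(U) = F(a) − λ(a − b), then m ≤ U ≤ M'. Consequently, under the CFL condition τ ≤ h, the explicit first order upwind scheme F(U_i^{n+1}) = F(U_i^n) − (τ/h)(U_i^n − U_{i−1}^n) preserves any bounds 0 ≤ m ≤ U_i^n ≤ M' of the data. -/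
lemma upwind_key (p lam : ℝ) (hp : 0 < p) (hlam0 : 0 < lam) (hlam1 : lam ≤ 1)
    (m M' : ℝ) (hm : 0 ≤ m) (hmM : m ≤ M')
    (a b U : ℝ) (ha : a ∈ Set.Icc m M') (hb : b ∈ Set.Icc m M') (hU : 0 ≤ U)
    (heq : U + U ^ p = (a + a ^ p) - lam * (a - b)) : m ≤ U ∧ U ≤ M' := by
  obtain ⟨ham, haM⟩ := ha
  obtain ⟨hbm, hbM⟩ := hb
  have ha0 : 0 ≤ a := le_trans hm ham
  have hM0 : 0 ≤ M' := le_trans hm hmM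
  have hlow : m + m ^ p ≤ U + U ^ p := by
    rw [heq]
    have h1 : m ^ p ≤ a ^ p := Real.rpow_le_rpow hm ham hp.le
    nlinarith
  have hhigh : U + U ^ p ≤ M' + M' ^ p := by
    rw [heq]
    have h1 : a ^ p ≤ M' ^ p := Real.rpow_le_rpow ha0 haM hp.le
    nlinarith
  constructor
  · by_contra hc
    push_neg at hc
    have : U ^ p ≤ m ^ p := Real.rpow_le_rpow hU hc.le hp.le
    linarith
  · by_contra hc
    push_neg at hc
    have : M' ^ p ≤ U ^ p := Real.rpow_le_rpow hM0 hc.le hp.le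
    linarith

/-- Bound preservation of the explicit upwind scheme with `F(u) = u + u^p` under the CFL
condition: for `λ ∈ (0,1]` and `a, b ∈ [m, M']` (`0 ≤ m ≤ M'`), any `U ≥ 0` with
`F(U) = F(a) − λ(a − b)` satisfies `m ≤ U ≤ M'`. Consequently, for `τ ≤ h`, the explicit
first order upwind scheme `F(Uᵢⁿ⁺¹) = F(Uᵢⁿ) − (τ/h)(Uᵢⁿ − U_{i−1}ⁿ)` preserves any
bounds `0 ≤ m ≤ Uᵢⁿ ≤ M'` of the data. -/
theorem stmt_10 (p lam : ℝ) (hp : 0 < p) (hlam0 : 0 < lam) (hlam1 : lam ≤ 1)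
    (m M' : ℝ) (hm : 0 ≤ m) (hmM : m ≤ M') :
    (∀ a b U : ℝ, a ∈ Set.Icc m M' → b ∈ Set.Icc m M' → 0 ≤ U →
      U + U ^ p = (a + a ^ p) - lam * (a - b) → m ≤ U ∧ U ≤ M') ∧
    (∀ τ h : ℝ, 0 < τ → 0 < h → τ ≤ h →
      ∀ (M : ℕ) (Un U : ℕ → ℝ),
        (∀ i, i ≤ M → Un i ∈ Set.Icc m M') →
        (∀ i, 1 ≤ i → i ≤ M → 0 ≤ U i ∧
          U i + U i ^ p = (Un i + Un i ^ p) - (τ / h) * (Un i - Un (i - 1))) →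
        ∀ i, 1 ≤ i → i ≤ M → m ≤ U i ∧ U i ≤ M') := by
  constructor
  · exact fun a b U ha hb hU heq =>
      upwind_key p lam hp hlam0 hlam1 m M' hm hmM a b U ha hb hU heq
  · intro τ h hτ hh hτh M Un U hUn hstep i hi1 hiM
    have hl0 : 0 < τ / h := div_pos hτ hh
    have hl1 : τ / h ≤ 1 := (div_le_one hh).mpr hτh
    obtain ⟨hU0, heq⟩ := hstep i hi1 hiM
    exact upwind_key p (τ / h) hp hl0 hl1 m M' hm hmM (Un i) (Un (i - 1)) (U i)
      (hUn i hiM) (hUn (i - 1) (le_trans (Nat.sub_le i 1) hiM)) hU0 heq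
end
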